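/- Let (Ω, μ) be a probability space, let x : Ω → ℝⁿ and g : Ω → ℝⁿ be square-integrable random vectors, and let θ ∈ ℝⁿ with E[x] = θ. Suppose the cross-product inequality holds: E[⟪x − θ, g⟫] ≥ E[‖g‖²] > 0. Then for every real a with 0 < a < 2, the shrinkage estimator x − a·g has strictly smaller risk than x, i.e. E[‖(x − a·g) − θ‖²] < E[‖x − θ‖²]. -/

import Mathlib

open MeasureTheory
open scoped RealInnerProductSpace

/-! Expanding the square, the risk of `x - a • g` is
`E‖x - θ‖² - 2a E⟪x - θ, g⟫ + a² E‖g‖²`, so by the cross-product inequality the change in risk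
is at most `a (a - 2) E‖g‖²`, which is negative for `0 < a < 2`. -/

namespace MeasureTheory

variable {Ω E : Type*} [MeasurableSpace Ω] {μ : Measure Ω}
  [NormedAddCommGroup E] [InnerProductSpace ℝ E]

theorem MemLp.integrable_inner {f g : Ω → E} (hf : MemLp f 2 μ) (hg : MemLp g 2 μ) :
    Integrable (fun ω => ⟪f ω, g ω⟫) μ :=
  (L2.integrable_inner (𝕜 := ℝ) (hf.toLp f) (hg.toLp g)).congr <| by
    filter_upwards [hf.coeFn_toLp, hg.coeFn_toLp] with ω hfω hgω
    rw [hfω, hgω]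

theorem integral_norm_sub_smul_sq {f g : Ω → E} (hf : MemLp f 2 μ) (hg : MemLp g 2 μ) (a : ℝ) :
    ∫ ω, ‖f ω - a • g ω‖ ^ 2 ∂μ
      = ∫ ω, ‖f ω‖ ^ 2 ∂μ - 2 * a * ∫ ω, ⟪f ω, g ω⟫ ∂μ + a ^ 2 * ∫ ω, ‖g ω‖ ^ 2 ∂μ := by
  have hf2 : Integrable (fun ω => ‖f ω‖ ^ 2) μ := hf.norm.integrable_sq
  have hg2 : Integrable (fun ω => ‖g ω‖ ^ 2) μ := hg.norm.integrable_sq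
  have hfg : Integrable (fun ω => ⟪f ω, g ω⟫) μ := hf.integrable_inner hg
  have expand : ∀ ω, ‖f ω - a • g ω‖ ^ 2
      = ‖f ω‖ ^ 2 - 2 * a * ⟪f ω, g ω⟫ + a ^ 2 * ‖g ω‖ ^ 2 := fun ω => by
    rw [norm_sub_sq_real, real_inner_smul_right, norm_smul, mul_pow, Real.norm_eq_abs, sq_abs]
    ring
  have hfg' : Integrable (fun ω => 2 * a * ⟪f ω, g ω⟫) μ := hfg.const_mul _
  have hdiff : Integrable (fun ω => ‖f ω‖ ^ 2 - 2 * a * ⟪f ω, g ω⟫) μ := hf2.sub hfg'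
  simp_rw [expand]
  rw [integral_add hdiff (hg2.const_mul _), integral_sub hf2 hfg', integral_const_mul,
    integral_const_mul]

end MeasureTheory

theorem shrinkage_dominates_of_cross_product_general
    {Ω : Type*} [MeasurableSpace Ω] (μ : Measure Ω) [IsProbabilityMeasure μ]
    {n : ℕ} (x g : Ω → EuclideanSpace ℝ (Fin n)) (θ : EuclideanSpace ℝ (Fin n))
    (hx : MemLp x 2 μ) (hg : MemLp g 2 μ)
    (hcross : (∫ ω, ‖g ω‖ ^ 2 ∂μ) ≤ ∫ ω, ⟪x ω - θ, g ω⟫ ∂μ)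
    (hpos : 0 < ∫ ω, ‖g ω‖ ^ 2 ∂μ)
    (a : ℝ) (ha0 : 0 < a) (ha2 : a < 2) :
    (∫ ω, ‖(x ω - a • g ω) - θ‖ ^ 2 ∂μ) < ∫ ω, ‖x ω - θ‖ ^ 2 ∂μ := by
  have hcentered : MemLp (fun ω => x ω - θ) 2 μ := hx.sub (memLp_const θ)
  simp_rw [sub_right_comm _ (a • _) θ]
  rw [integral_norm_sub_smul_sq hcentered hg a]
  nlinarith [mul_pos (mul_pos ha0 (sub_pos.2 ha2)) hpos]

/-- Shrinkage domination under the scalar quadratic loss: if the cross-product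
inequality `E⟪x - θ, g⟫ ≥ E‖g‖² > 0` holds, then for `0 < a < 2` the shrinkage
estimator `x - a • g` has strictly smaller risk than `x`. -/
theorem shrinkage_dominates_of_cross_product
    {Ω : Type*} [MeasurableSpace Ω] (μ : Measure Ω) [IsProbabilityMeasure μ]
    {n : ℕ} (x g : Ω → EuclideanSpace ℝ (Fin n)) (θ : EuclideanSpace ℝ (Fin n))
    (hx : MemLp x 2 μ) (hg : MemLp g 2 μ)
    (hmean : ∫ ω, x ω ∂μ = θ)
    (hcross : (∫ ω, ‖g ω‖ ^ 2 ∂μ) ≤ ∫ ω, ⟪x ω - θ, g ω⟫ ∂μ)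
    (hpos : 0 < ∫ ω, ‖g ω‖ ^ 2 ∂μ)
    (a : ℝ) (ha0 : 0 < a) (ha2 : a < 2) :
    (∫ ω, ‖(x ω - a • g ω) - θ‖ ^ 2 ∂μ) < ∫ ω, ‖x ω - θ‖ ^ 2 ∂μ :=
  shrinkage_dominates_of_cross_product_general μ x g θ hx hg hcross hpos a ha0 ha2
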